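/- Let (X,Y) ∼ D where D is a probability distribution on {-1,1}^d × {-1,1}, let J ⊆ {1,…,d} with |J| = k, let η ≥ 0, and let (b_S)_{S ⊆ J} be real numbers with |b_S − a_S| ≤ 2^{−d}·η for every S ⊆ J, where a_S = 2^{−d}·E[Y·χ_S(X)]. Define ĥ(x) = Σ_{S⊆J} b_S·χ_S(x) and f^J(x) = Σ_{S⊆J} a_S·χ_S(x). Then P{Y ≠ sign(ĥ(X))} ≤ 1/2 − (1/2)·Σ_{x ∈ {-1,1}^d} |f^J(x)| + U( 2^{k/2}·η ), where U(x) = x³ + (3/2)x² + (3/2)x. -/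

import Mathlib

/-!
Write `s = sign ∘ ĥ`. Since `Y` and `s(X)` lie in `{-1,1}`, `P{Y ≠ s(X)} = 1/2 - E[Y·s(X)]/2`.
As `ĥ`, hence `s`, only depends on the coordinates in `J`, its expansion in characters only
involves `χ_S` with `S ⊆ J`, and integrating it against `Y` gives `E[Y·s(X)] = Σ_x s(x)·f^J(x)`.
Pointwise `s(x)·f^J(x) ≥ |f^J(x)| - 2|f^J(x) - ĥ(x)|`, and Cauchy–Schwarz with Parseval bounds
`Σ_x |f^J(x) - ĥ(x)|` by `2^{k/2}·η ≤ U(2^{k/2}·η)`.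
-/

open MeasureTheory ProbabilityTheory

/-- The sign function: `sign t = 1` if `t ≥ 0` and `-1` otherwise. -/
noncomputable def signFun (t : ℝ) : ℝ := if 0 ≤ t then 1 else -1

/-- The polynomial `U(x) = x³ + (3/2)x² + (3/2)x`. -/
noncomputable def Upoly (x : ℝ) : ℝ := x ^ 3 + (3 / 2) * x ^ 2 + (3 / 2) * x

/-- The character (monomial) `χ_S(x) = ∏_{j ∈ S} x_j` associated with `S ⊆ [d]`. -/
noncomputable def chiChar {d : ℕ} (S : Finset (Fin d)) (x : Fin d → ℝ) : ℝ := ∏ j ∈ S, x j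

/-- The point of the Boolean cube `{-1,1}^d` encoded by a Boolean vector. -/
noncomputable def pmOf {d : ℕ} (b : Fin d → Bool) : Fin d → ℝ :=
  fun i => if b i then 1 else -1

/-- The stochastic Fourier coefficient `a_S = 2^{-d}·E[Y·χ_S(X)]` of the label under `D`. -/
noncomputable def coeffA {d : ℕ} (D : Measure ((Fin d → ℝ) × ℝ)) (S : Finset (Fin d)) : ℝ :=
  (1 / 2 ^ d : ℝ) * ∫ p, p.2 * chiChar S p.1 ∂D

/-- The function `f^J(x) = Σ_{S ⊆ J} a_S·χ_S(x)`. -/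
noncomputable def fJ {d : ℕ} (D : Measure ((Fin d → ℝ) × ℝ)) (J : Finset (Fin d))
    (x : Fin d → ℝ) : ℝ :=
  ∑ S ∈ J.powerset, coeffA D S * chiChar S x

section BooleanCube

variable {d : ℕ}

lemma exists_pmOf_eq {x : Fin d → ℝ} (hx : ∀ i, x i = 1 ∨ x i = -1) : ∃ y, pmOf y = x :=
  ⟨fun i => decide (x i = 1), funext fun i => by rcases hx i with h | h <;> norm_num [pmOf, h]⟩

lemma pmOf_update (x : Fin d → Bool) (i : Fin d) (v : Bool) :
    pmOf (Function.update x i v) = Function.update (pmOf x) i (if v then 1 else -1) := by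
  ext j
  by_cases h : j = i
  · subst h; simp [pmOf]
  · simp [pmOf, h]

lemma pmOf_sq (x : Fin d → Bool) (j : Fin d) : pmOf x j ^ 2 = 1 := by
  by_cases h : x j <;> simp [pmOf, h]

lemma chiChar_pmOf_sq (S : Finset (Fin d)) (x : Fin d → Bool) : chiChar S (pmOf x) ^ 2 = 1 := by
  rw [chiChar, ← Finset.prod_pow]
  exact Finset.prod_eq_one fun j _ => pmOf_sq x j

lemma chiChar_pmOf_flip {S : Finset (Fin d)} {i : Fin d} (hi : i ∈ S) (x : Fin d → Bool) :
    chiChar S (pmOf (Function.update x i (!x i))) = -chiChar S (pmOf x) := by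
  rw [chiChar, chiChar, pmOf_update, Finset.prod_update_of_mem hi, ← Finset.mul_prod_erase _ _ hi,
    ← Finset.sdiff_singleton_eq_erase]
  by_cases h : x i <;> simp [pmOf, h]

/-- Flipping a coordinate `i ∈ S \ J` is an involution of the cube that fixes `g` and
negates `χ_S`. -/
lemma sum_pmOf_mul_chiChar_eq_zero {J S : Finset (Fin d)} {g : (Fin d → Bool) → ℝ}
    (hg : DependsOn g J) (hS : ¬ S ⊆ J) :
    ∑ x, g x * chiChar S (pmOf x) = 0 := by
  obtain ⟨i, hiS, hiJ⟩ := Finset.not_subset.mp hS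
  have flip_inv : Function.Involutive fun x : Fin d → Bool => Function.update x i (!x i) :=
    fun x => by simp
  have flip_neg (x : Fin d → Bool) :
      g (Function.update x i (!x i)) * chiChar S (pmOf (Function.update x i (!x i)))
        = -(g x * chiChar S (pmOf x)) := by
    have hfix : ∀ j ∈ (J : Set (Fin d)), Function.update x i (!x i) j = x j :=
      fun j hj => Function.update_of_ne (by rintro rfl; exact hiJ hj) _ _
    rw [chiChar_pmOf_flip hiS, hg hfix]
    ring
  have := Equiv.sum_comp flip_inv.toPerm fun x => g x * chiChar S (pmOf x)
  simp only [Function.Involutive.coe_toPerm, flip_neg, Finset.sum_neg_distrib] at this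
  linarith

lemma sum_pmOf_chiChar (S : Finset (Fin d)) :
    ∑ x : Fin d → Bool, chiChar S (pmOf x) = if S = ∅ then 2 ^ d else 0 := by
  split_ifs with hS
  · simp [hS, chiChar]
  · have h1 : DependsOn (fun _ : Fin d → Bool => (1 : ℝ)) (∅ : Finset (Fin d)) := by
      rw [Finset.coe_empty]; exact dependsOn_const 1
    simpa using sum_pmOf_mul_chiChar_eq_zero h1 (by simpa using hS)

lemma chiChar_mul_chiChar (S T : Finset (Fin d)) (x : Fin d → ℝ) :
    chiChar S x * chiChar T x = chiChar (symmDiff S T) x * chiChar (S ∩ T) x ^ 2 := by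
  rw [chiChar, chiChar, ← Finset.prod_union_inter, ← Finset.prod_sdiff Finset.inter_subset_union,
    ← Finset.sup_eq_union, ← Finset.inf_eq_inter, ← symmDiff_eq_sup_sdiff_inf]
  unfold chiChar
  ring

lemma sum_pmOf_chiChar_mul_chiChar (S T : Finset (Fin d)) :
    ∑ x : Fin d → Bool, chiChar S (pmOf x) * chiChar T (pmOf x) = if S = T then 2 ^ d else 0 := by
  simp only [chiChar_mul_chiChar, chiChar_pmOf_sq, mul_one, sum_pmOf_chiChar,
    Finset.symmDiff_eq_empty]

lemma sum_subsets_chiChar_mul_chiChar (x y : Fin d → Bool) :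
    ∑ S : Finset (Fin d), chiChar S (pmOf x) * chiChar S (pmOf y) = if x = y then 2 ^ d else 0 := by
  simp only [chiChar, ← Finset.prod_mul_distrib]
  rw [← Finset.powerset_univ, ← Finset.prod_one_add]
  split_ifs with hxy
  · subst hxy
    simp only [← sq, pmOf_sq]
    norm_num
  · obtain ⟨i, hi⟩ := Function.ne_iff.mp hxy
    refine Finset.prod_eq_zero (Finset.mem_univ i) ?_
    cases hx : x i <;> cases hy : y i <;> simp_all [pmOf]

lemma dependsOn_sum_powerset_chiChar_pmOf (J : Finset (Fin d)) (c : Finset (Fin d) → ℝ) :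
    DependsOn (fun x => ∑ S ∈ J.powerset, c S * chiChar S (pmOf x)) J := fun x y hxy =>
  Finset.sum_congr rfl fun S hS => congrArg _ <| Finset.prod_congr rfl fun j hj => by
    simp only [pmOf, hxy j (Finset.mem_powerset.mp hS hj)]

noncomputable def cubeCoeff (g : (Fin d → Bool) → ℝ) (S : Finset (Fin d)) : ℝ :=
  (1 / 2 ^ d : ℝ) * ∑ x, g x * chiChar S (pmOf x)

lemma sum_cubeCoeff_mul_chiChar (g : (Fin d → Bool) → ℝ) (y : Fin d → Bool) :
    ∑ S, cubeCoeff g S * chiChar S (pmOf y) = g y := by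
  simp only [cubeCoeff, mul_assoc, ← Finset.mul_sum, Finset.sum_mul]
  rw [Finset.sum_comm]
  simp only [← Finset.mul_sum, sum_subsets_chiChar_mul_chiChar, mul_ite, mul_zero,
    Finset.sum_ite_eq', Finset.mem_univ, if_true]
  field_simp

lemma cubeCoeff_eq_zero_of_not_subset {J S : Finset (Fin d)} {g : (Fin d → Bool) → ℝ}
    (hg : DependsOn g J) (hS : ¬ S ⊆ J) : cubeCoeff g S = 0 := by
  rw [cubeCoeff, sum_pmOf_mul_chiChar_eq_zero hg hS, mul_zero]

lemma sum_powerset_cubeCoeff_mul_chiChar {J : Finset (Fin d)} {g : (Fin d → Bool) → ℝ}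
    (hg : DependsOn g J) (y : Fin d → Bool) :
    ∑ S ∈ J.powerset, cubeCoeff g S * chiChar S (pmOf y) = g y := by
  rw [← sum_cubeCoeff_mul_chiChar g y]
  refine Finset.sum_subset (Finset.subset_univ _) fun S _ hS => ?_
  rw [cubeCoeff_eq_zero_of_not_subset hg (by simpa using hS), zero_mul]

lemma sum_pmOf_sq_sum_chiChar (𝒮 : Finset (Finset (Fin d))) (c : Finset (Fin d) → ℝ) :
    ∑ x : Fin d → Bool, (∑ S ∈ 𝒮, c S * chiChar S (pmOf x)) ^ 2 = 2 ^ d * ∑ S ∈ 𝒮, c S ^ 2 := by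
  calc ∑ x : Fin d → Bool, (∑ S ∈ 𝒮, c S * chiChar S (pmOf x)) ^ 2
      = ∑ S ∈ 𝒮, ∑ T ∈ 𝒮,
          c S * c T * ∑ x : Fin d → Bool, chiChar S (pmOf x) * chiChar T (pmOf x) := by
        simp only [sq, Finset.sum_mul_sum]
        simp only [Finset.mul_sum]
        rw [Finset.sum_comm]
        refine Finset.sum_congr rfl fun S _ => ?_
        rw [Finset.sum_comm]
        exact Finset.sum_congr rfl fun T _ => Finset.sum_congr rfl fun x _ => by ring
    _ = 2 ^ d * ∑ S ∈ 𝒮, c S ^ 2 := by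
        simp only [sum_pmOf_chiChar_mul_chiChar, mul_ite, mul_zero, Finset.sum_ite_eq,
          Finset.mul_sum]
        exact Finset.sum_congr rfl fun S hS => by rw [if_pos hS]; ring

lemma sum_pmOf_abs_sum_chiChar_le (J : Finset (Fin d)) (c : Finset (Fin d) → ℝ) {ε : ℝ}
    (hc : ∀ S ∈ J.powerset, |c S| ≤ ε) :
    ∑ x : Fin d → Bool, |∑ S ∈ J.powerset, c S * chiChar S (pmOf x)|
      ≤ 2 ^ d * (2 : ℝ) ^ ((J.card : ℝ) / 2) * ε := by
  have hε : 0 ≤ ε := (abs_nonneg _).trans (hc ∅ (Finset.empty_mem_powerset J))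
  have hcoeff : ∑ S ∈ J.powerset, c S ^ 2 ≤ 2 ^ J.card * ε ^ 2 := by
    calc ∑ S ∈ J.powerset, c S ^ 2 ≤ ∑ _S ∈ J.powerset, ε ^ 2 :=
          Finset.sum_le_sum fun S hS => sq_le_sq' (abs_le.mp (hc S hS)).1 (abs_le.mp (hc S hS)).2
      _ = 2 ^ J.card * ε ^ 2 := by simp
  have hrpow : ((2 : ℝ) ^ ((J.card : ℝ) / 2)) ^ 2 = 2 ^ J.card := by
    rw [← Real.rpow_natCast, ← Real.rpow_mul zero_le_two]; norm_num
  refine (pow_le_pow_iff_left₀ (Finset.sum_nonneg fun _ _ => abs_nonneg _) (by positivity)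
    two_ne_zero).mp ?_
  calc (∑ x : Fin d → Bool, |∑ S ∈ J.powerset, c S * chiChar S (pmOf x)|) ^ 2
      ≤ 2 ^ d * ∑ x : Fin d → Bool, (∑ S ∈ J.powerset, c S * chiChar S (pmOf x)) ^ 2 := by
        simpa using sq_sum_le_card_mul_sum_sq (s := Finset.univ)
          (f := fun x : Fin d → Bool => |∑ S ∈ J.powerset, c S * chiChar S (pmOf x)|)
    _ ≤ 2 ^ d * (2 ^ d * (2 ^ J.card * ε ^ 2)) := by
        rw [sum_pmOf_sq_sum_chiChar]; gcongr
    _ = (2 ^ d * (2 : ℝ) ^ ((J.card : ℝ) / 2) * ε) ^ 2 := by rw [mul_pow, mul_pow, hrpow]; ring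

end BooleanCube

lemma signFun_eq_one_or_neg_one (t : ℝ) : signFun t = 1 ∨ signFun t = -1 := by
  unfold signFun; split_ifs <;> simp

lemma measurable_signFun : Measurable signFun :=
  Measurable.ite measurableSet_Ici measurable_const measurable_const

lemma abs_sub_two_mul_abs_sub_le_signFun_mul (f h : ℝ) : |f| - 2 * |f - h| ≤ signFun h * f := by
  unfold signFun
  split_ifs <;> cases abs_cases f <;> cases abs_cases (f - h) <;> linarith

lemma le_Upoly {t : ℝ} (ht : 0 ≤ t) : t ≤ Upoly t := by
  unfold Upoly; nlinarith [pow_nonneg ht 3, sq_nonneg t]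

/-- For labels and predictions in `{-1,1}`, `1[y ≠ g x] = (1 - y·g x)/2`. -/
lemma toReal_measure_label_ne {α : Type*} [MeasurableSpace α] {D : Measure (α × ℝ)}
    [IsProbabilityMeasure D] (hY : ∀ᵐ p ∂D, p.2 = 1 ∨ p.2 = -1) {g : α → ℝ} (hgm : Measurable g)
    (hg : ∀ x, g x = 1 ∨ g x = -1) :
    (D {p | p.2 ≠ g p.1}).toReal = 1 / 2 - 1 / 2 * ∫ p, p.2 * g p.1 ∂D := by
  have hmeas : MeasurableSet {p : α × ℝ | p.2 ≠ g p.1} :=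
    (measurableSet_eq_fun measurable_snd (hgm.comp measurable_fst)).compl
  have hind : {p : α × ℝ | p.2 ≠ g p.1}.indicator 1 =ᵐ[D]
      fun p => 1 / 2 - 1 / 2 * (p.2 * g p.1) := by
    filter_upwards [hY] with p hp
    rcases hp with h | h <;> rcases hg p.1 with h' | h' <;> norm_num [Set.indicator_apply, h, h']
  have hint : Integrable (fun p : α × ℝ => p.2 * g p.1) D := by
    refine .of_bound (by fun_prop) 1 ?_
    filter_upwards [hY] with p hp
    rcases hp with h | h <;> rcases hg p.1 with h' | h' <;> simp [h, h']
  rw [← measureReal_def, ← integral_indicator_one hmeas, integral_congr_ae hind,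
    integral_sub (integrable_const _) (hint.const_mul _), integral_const_mul]
  simp

section Distribution

variable {d : ℕ} {D : Measure ((Fin d → ℝ) × ℝ)}

lemma integrable_label_mul_chiChar [IsFiniteMeasure D]
    (hD : ∀ᵐ p ∂D, (∀ i, p.1 i = 1 ∨ p.1 i = -1) ∧ (p.2 = 1 ∨ p.2 = -1)) (S : Finset (Fin d)) :
    Integrable (fun p => p.2 * chiChar S p.1) D := by
  refine .of_bound (by unfold chiChar; fun_prop) 1 ?_
  filter_upwards [hD] with p ⟨hX, hY⟩
  obtain ⟨y, hy⟩ := exists_pmOf_eq hX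
  have hchi : |chiChar S p.1| ≤ 1 := by rw [← hy, ← sq_le_one_iff_abs_le_one, chiChar_pmOf_sq]
  rcases hY with h | h <;> simpa [h] using hchi

/-- On the cube, `y·g(x)` for a `J`-junta `g` is a combination of the `y·χ_S(x)`, `S ⊆ J`, whose
expectations are the coefficients `2^d·a_S`. -/
lemma integral_label_mul_eq_sum_mul_fJ [IsFiniteMeasure D]
    (hD : ∀ᵐ p ∂D, (∀ i, p.1 i = 1 ∨ p.1 i = -1) ∧ (p.2 = 1 ∨ p.2 = -1)) (J : Finset (Fin d))
    {g : (Fin d → ℝ) → ℝ} (hg : DependsOn (g ∘ pmOf) J) :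
    ∫ p, p.2 * g p.1 ∂D = ∑ x : Fin d → Bool, g (pmOf x) * fJ D J (pmOf x) := by
  have hexpand : (fun p => p.2 * g p.1) =ᵐ[D]
      fun p => ∑ S ∈ J.powerset, cubeCoeff (g ∘ pmOf) S * (p.2 * chiChar S p.1) := by
    filter_upwards [hD] with p hp
    obtain ⟨y, hy⟩ := exists_pmOf_eq hp.1
    rw [← hy, ← Function.comp_apply (f := g), ← sum_powerset_cubeCoeff_mul_chiChar hg y,
      Finset.mul_sum]
    exact Finset.sum_congr rfl fun S _ => by ring
  rw [integral_congr_ae hexpand,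
    integral_finsetSum _ fun S _ => (integrable_label_mul_chiChar hD S).const_mul _]
  simp only [integral_const_mul]
  simp only [fJ, coeffA, cubeCoeff, Function.comp_apply, Finset.mul_sum, Finset.sum_mul]
  rw [Finset.sum_comm]
  refine Finset.sum_congr rfl fun x _ => Finset.sum_congr rfl fun S _ => ?_
  field_simp

end Distribution

/-- For `(X,Y) ∼ D` on `{-1,1}^d × {-1,1}`, `J ⊆ [d]` with `|J| = k`, and
coefficients `b_S` with `|b_S - a_S| ≤ 2^{-d}·η` for all `S ⊆ J`, the predictor
`sign(ĥ)` with `ĥ = Σ_{S⊆J} b_S·χ_S` satisfies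
`P{Y ≠ sign(ĥ(X))} ≤ 1/2 - (1/2)·Σ_x |f^J(x)| + U(2^{k/2}·η)`. -/
theorem loss_sign_estimated_fourier_le
    (d k : ℕ) (D : Measure ((Fin d → ℝ) × ℝ)) [IsProbabilityMeasure D]
    (hD : ∀ᵐ p ∂D, (∀ i, p.1 i = 1 ∨ p.1 i = -1) ∧ (p.2 = 1 ∨ p.2 = -1))
    (J : Finset (Fin d)) (hJ : J.card = k)
    (η : ℝ) (hη : 0 ≤ η) (b : Finset (Fin d) → ℝ)
    (hb : ∀ S ∈ J.powerset, |b S - coeffA D S| ≤ (1 / 2 ^ d : ℝ) * η) :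
    (D {p | p.2 ≠ signFun (∑ S ∈ J.powerset, b S * chiChar S p.1)}).toReal
      ≤ 1 / 2 - (1 / 2) * (∑ x : Fin d → Bool, |fJ D J (pmOf x)|)
        + Upoly ((2 : ℝ) ^ ((k : ℝ) / 2) * η) := by
  subst hJ
  set h : (Fin d → ℝ) → ℝ := fun x => ∑ S ∈ J.powerset, b S * chiChar S x with h_def
  have hjunta : DependsOn (fun x => signFun (h (pmOf x))) J := fun _ _ hxy =>
    congrArg signFun (dependsOn_sum_powerset_chiChar_pmOf J b hxy)
  have herr :
      ∑ x : Fin d → Bool, |fJ D J (pmOf x) - h (pmOf x)| ≤ 2 ^ ((J.card : ℝ) / 2) * η := by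
    convert sum_pmOf_abs_sum_chiChar_le J (fun S => coeffA D S - b S)
      (fun S hS => by rw [abs_sub_comm]; exact hb S hS) using 1
    · simp only [fJ, h_def, ← Finset.sum_sub_distrib, sub_mul]
    · field_simp
  calc (D {p | p.2 ≠ signFun (h p.1)}).toReal
      = 1 / 2 - 1 / 2 * ∫ p, p.2 * signFun (h p.1) ∂D :=
        toReal_measure_label_ne (hD.mono fun p hp => hp.2)
          (measurable_signFun.comp (by simp only [h_def, chiChar]; fun_prop))
          fun x => signFun_eq_one_or_neg_one _
    _ = 1 / 2 - 1 / 2 * ∑ x : Fin d → Bool, signFun (h (pmOf x)) * fJ D J (pmOf x) := by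
        rw [integral_label_mul_eq_sum_mul_fJ (g := fun x => signFun (h x)) hD J hjunta]
    _ ≤ 1 / 2 - 1 / 2 *
          ∑ x : Fin d → Bool, (|fJ D J (pmOf x)| - 2 * |fJ D J (pmOf x) - h (pmOf x)|) := by
        gcongr with x
        exact abs_sub_two_mul_abs_sub_le_signFun_mul _ _
    _ ≤ 1 / 2 - 1 / 2 * ∑ x : Fin d → Bool, |fJ D J (pmOf x)| + 2 ^ ((J.card : ℝ) / 2) * η := by
        rw [Finset.sum_sub_distrib, ← Finset.mul_sum]
        linarith
    _ ≤ _ := by gcongr; exact le_Upoly (by positivity)
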